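/- arXiv:1611.09033 — 2 statements merged into one kernel-verified Lean document; each statement's English description precedes it below -/
import Mathlib

section
/- Let n ≥ 9 be odd and put α = (n − 1)/2. Then gcd(α, n) = 1, so the edge set H = {v_{iα} v_{(i+1)α} : i = 0, 1, …, n−1} (all indices taken modulo n) forms a Hamiltonian cycle of the convex complete graph K_n containing no boundary edge, and K_n − H admits a triangulation. -/
namespace ConvexTri

/-- `x` lies strictly inside the open arc from `a` to `b` (in the positive cyclic direction). -/
def InOpenArc (n : ℕ) (a b x : ZMod n) : Prop :=
  0 < (x - a).val ∧ (x - a).val < (b - a).val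

/-- Two chords of the convex `n`-gon cross: the endpoints of one separate the endpoints of
the other on the cycle, i.e. exactly one endpoint of the second chord lies in each of the two
open arcs determined by the endpoints of the first chord. -/
def Cross (n : ℕ) (e f : Sym2 (ZMod n)) : Prop :=
  ∃ a b c d : ZMod n, e = s(a, b) ∧ f = s(c, d) ∧
    InOpenArc n a b c ∧ InOpenArc n b a d

/-- Boundary edge of the convex `n`-gon. -/
def IsBoundary (n : ℕ) (e : Sym2 (ZMod n)) : Prop :=
  ∃ i : ZMod n, e = s(i, i + 1)

/-- A diagonal: an edge of `K_n` (a pair of distinct vertices) that is not a boundary edge. -/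
def IsDiagonal (n : ℕ) (e : Sym2 (ZMod n)) : Prop :=
  ¬ e.IsDiag ∧ ¬ IsBoundary n e

/-- `K_n - F` admits a triangulation: `F` contains no boundary edge and there is a set of
`n - 3` pairwise non-crossing diagonals disjoint from `F`. -/
def AdmitsTriangulation (n : ℕ) (F : Finset (Sym2 (ZMod n))) : Prop :=
  (∀ e ∈ F, ¬ IsBoundary n e) ∧
  ∃ T : Finset (Sym2 (ZMod n)), T.card = n - 3 ∧
    (∀ e ∈ T, IsDiagonal n e) ∧
    (∀ e ∈ T, ∀ f ∈ T, ¬ Cross n e f) ∧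
    (∀ e ∈ T, e ∉ F)

/-- Degree of a vertex in an edge set. -/
def deg (n : ℕ) (F : Finset (Sym2 (ZMod n))) (v : ZMod n) : ℕ :=
  (F.filter (fun e => v ∈ e)).card

/-- A pendant vertex of `F` is a vertex of degree 1. -/
def Pendant (n : ℕ) (F : Finset (Sym2 (ZMod n))) (v : ZMod n) : Prop :=
  deg n F v = 1

/-- `F` has no isolated vertices. -/
def NoIsolated (n : ℕ) (F : Finset (Sym2 (ZMod n))) : Prop :=
  ∀ v : ZMod n, 0 < deg n F v

/-- A relabeling of the vertices by a rotation and possibly a reflection of the cyclic order. -/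
def IsDihedral (n : ℕ) (φ : ZMod n → ZMod n) : Prop :=
  (∃ c : ZMod n, φ = fun x => c + x) ∨ (∃ c : ZMod n, φ = fun x => c - x)

/-- The explicit shape of the configuration `F_n(*)` (before relabeling). -/
def FStarShape (n : ℕ) (F : Finset (Sym2 (ZMod n))) : Prop :=
  F = (Finset.image (fun i : ℕ => s((0 : ZMod n), (i : ZMod n))) (Finset.Icc 2 (n - 2))) ∪
      {s((1 : ZMod n), (-1 : ZMod n))} ∨
  ∃ k : ℕ, 2 ≤ k ∧ k ≤ n - 4 ∧
    (∀ i : ℕ, i < k → 2 ≤ deg n F (i : ZMod n) ∧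
      s((i : ZMod n) - 1, (i : ZMod n) + 1) ∈ F) ∧
    (∀ i : ℕ, k ≤ i → i ≤ n - 1 → deg n F (i : ZMod n) = 1 ∧
      ∀ w : ZMod n, s((i : ZMod n), w) ∈ F → ¬ Pendant n F w) ∧
    (∀ u v i j : ZMod n, Pendant n F u → Pendant n F v →
      s(u, i) ∈ F → s(v, j) ∈ F → Cross n s(u, i) s(v, j) → i = j + 1 ∨ j = i + 1)

/-- `F` has the configuration `F_n(*)`. -/
def IsFStar (n : ℕ) (F : Finset (Sym2 (ZMod n))) : Prop :=
  (∀ e ∈ F, ¬ e.IsDiag) ∧ NoIsolated n F ∧ F.card = n - 2 ∧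
  ∃ φ : ZMod n → ZMod n, IsDihedral n φ ∧ FStarShape n (F.image (Sym2.map φ))

/-- Relabeling map after deleting the vertex `i`: the remaining `n - 1` vertices in their
induced cyclic order. -/
def delMap (n : ℕ) (i : ZMod n) (x : ZMod n) : ZMod (n - 1) :=
  (((x - i).val - 1 : ℕ) : ZMod (n - 1))

/-- `F` with the vertex `i` deleted, as an edge set on the remaining `n - 1` vertices
in their induced cyclic order. -/
def delete (n : ℕ) (F : Finset (Sym2 (ZMod n))) (i : ZMod n) :
    Finset (Sym2 (ZMod (n - 1))) :=
  (F.filter (fun e => i ∉ e)).image (Sym2.map (delMap n i))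

/-- `F` has the configuration `J_n(*)`. -/
def IsJStar (n : ℕ) (F : Finset (Sym2 (ZMod n))) : Prop :=
  (∀ e ∈ F, ¬ e.IsDiag) ∧ NoIsolated n F ∧ F.card = n - 1 ∧
  (∀ i : ZMod n, s(i - 1, i + 1) ∉ F → deg n F i ≤ 2) ∧
  (∀ i : ZMod n, s(i - 1, i + 1) ∉ F → deg n F i = 2 → IsFStar (n - 1) (delete n F i))

/-- `J_{n,k}`: the set of vertices `v_i` of degree `k` in `F` with `v_{i-1}v_{i+1} ∉ F`. -/
def Jset (n k : ℕ) (F : Finset (Sym2 (ZMod n))) : Set (ZMod n) :=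
  {i | deg n F i = k ∧ s(i - 1, i + 1) ∉ F}

/-- `F` is a configuration `J_n(*)` of Type-1. -/
def IsJStarType1 (n : ℕ) (F : Finset (Sym2 (ZMod n))) : Prop :=
  IsJStar n F ∧ Jset n 2 F = ∅ ∧ ∃ e ∈ F, IsFStar n (F.erase e)

/-- `F` is a configuration `J_n(*)` of Type-2. -/
def IsJStarType2 (n : ℕ) (F : Finset (Sym2 (ZMod n))) : Prop :=
  IsJStar n F ∧ (Jset n 2 F).Nonempty ∧
  ∀ i ∈ Jset n 2 F, ∀ j₁ j₂ t w : ZMod n,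
    s(i, j₁) ∈ F → s(i, j₂) ∈ F → j₁ ≠ j₂ →
    Pendant n F t → s(t, w) ∈ F →
    Cross n s(t, w) s(i, j₁) → Cross n s(t, w) s(i, j₂) →
    j₁ = w + 1 ∨ w = j₁ + 1 ∨ j₂ = w + 1 ∨ w = j₂ + 1

/-- A Hamiltonian cycle of the convex complete graph `K_n`, as an edge set. -/
def IsHamCycle (n : ℕ) (H : Finset (Sym2 (ZMod n))) : Prop :=
  ∃ g : ZMod n ≃ ZMod n,
    H = Finset.image (fun i : ℕ => s(g (i : ZMod n), g ((i : ZMod n) + 1)))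
      (Finset.range n) ∧ H.card = n

/-- A graph `G` is potentially triangulable in `K_n` if its vertices can be placed injectively
on the vertices of `K_n` so that `K_n` minus the image of the edge set of `G` admits a
triangulation. -/
def PotentiallyTriangulable {V : Type*} (G : SimpleGraph V) (n : ℕ) : Prop :=
  ∃ f : V → ZMod n, Function.Injective f ∧
    ∃ F' : Finset (Sym2 (ZMod n)),
      (F' : Set (Sym2 (ZMod n))) = Sym2.map f '' G.edgeSet ∧
      AdmitsTriangulation n F'


lemma val_cast_sub {n : ℕ} [NeZero n] {a x : ℕ} (ha : a < n) (hx : x < n) :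
    ((x : ZMod n) - a).val = if a ≤ x then x - a else n - (a - x) := by
  split_ifs with h
  · have hxa : ((x : ZMod n) - a) = ((x - a : ℕ) : ZMod n) := by
      rw [Nat.cast_sub h]
    rw [hxa, ZMod.val_cast_of_lt (by omega)]
  · have hxa : ((x : ZMod n) - a) = ((n - (a - x) : ℕ) : ZMod n) := by
      rw [Nat.cast_sub (by omega : a - x ≤ n), Nat.cast_sub (by omega : x ≤ a),
        ZMod.natCast_self]
      ring
    rw [hxa, ZMod.val_cast_of_lt (by omega)]

lemma val_sub_val {n : ℕ} [NeZero n] (a x : ZMod n) :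
    (x - a).val = if a.val ≤ x.val then x.val - a.val else n - (a.val - x.val) := by
  have hx : ((x.val : ℕ) : ZMod n) = x := ZMod.natCast_rightInverse x
  have ha : ((a.val : ℕ) : ZMod n) = a := ZMod.natCast_rightInverse a
  conv_lhs => rw [← hx, ← ha]
  rw [val_cast_sub (ZMod.val_lt a) (ZMod.val_lt x)]

lemma inOpenArc_iff_val {n : ℕ} [NeZero n] (a b x : ZMod n) :
    InOpenArc n a b x ↔
      ((a.val < x.val ∧ x.val < b.val) ∨ (a.val < x.val ∧ b.val < a.val) ∨
        (x.val < a.val ∧ x.val < b.val ∧ b.val < a.val)) := by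
  have h1 := ZMod.val_lt a
  have h2 := ZMod.val_lt b
  have h3 := ZMod.val_lt x
  unfold InOpenArc
  rw [val_sub_val, val_sub_val]
  split_ifs <;> omega

lemma not_cross_of_mem {n : ℕ} [NeZero n] {e f : Sym2 (ZMod n)} (v : ZMod n)
    (hve : v ∈ e) (hvf : v ∈ f) : ¬ Cross n e f := by
  rintro ⟨a, b, c, d, rfl, rfl, ⟨h1, h2⟩, ⟨h3, h4⟩⟩
  rw [Sym2.mem_iff] at hve hvf
  rcases hve with rfl | rfl
  · rcases hvf with h | h
    · rw [← h] at h1; simp at h1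
    · rw [← h] at h4; exact lt_irrefl _ h4
  · rcases hvf with h | h
    · rw [← h] at h2; exact lt_irrefl _ h2
    · rw [← h] at h3; simp at h3

lemma cross_iff {n : ℕ} (a b c d : ZMod n) :
    Cross n s(a, b) s(c, d) ↔
      (InOpenArc n a b c ∧ InOpenArc n b a d) ∨ (InOpenArc n a b d ∧ InOpenArc n b a c) := by
  constructor
  · rintro ⟨a', b', c', d', he, hf, h1, h2⟩
    rw [Sym2.eq_iff] at he hf
    rcases he with ⟨rfl, rfl⟩ | ⟨rfl, rfl⟩ <;> rcases hf with ⟨rfl, rfl⟩ | ⟨rfl, rfl⟩ <;> tauto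
  · rintro (⟨h1, h2⟩ | ⟨h1, h2⟩)
    · exact ⟨a, b, c, d, rfl, rfl, h1, h2⟩
    · exact ⟨a, b, d, c, rfl, Sym2.eq_swap, h1, h2⟩

/-- For odd `n ≥ 9` and `α = (n-1)/2`: `gcd(α, n) = 1`, the edges
`v_{iα}v_{(i+1)α}` form a Hamiltonian cycle of the convex `K_n` containing no boundary edge,
and `K_n - H` admits a triangulation. -/
theorem stmt13 (n : ℕ) (hn : 9 ≤ n) (hodd : Odd n) :
    Nat.gcd ((n - 1) / 2) n = 1 ∧
    IsHamCycle n
      (Finset.image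
        (fun i : ℕ => s((((n - 1) / 2 : ℕ) : ZMod n) * (i : ZMod n),
          (((n - 1) / 2 : ℕ) : ZMod n) * ((i : ZMod n) + 1))) (Finset.range n)) ∧
    (∀ e ∈ Finset.image
        (fun i : ℕ => s((((n - 1) / 2 : ℕ) : ZMod n) * (i : ZMod n),
          (((n - 1) / 2 : ℕ) : ZMod n) * ((i : ZMod n) + 1))) (Finset.range n),
      ¬ IsBoundary n e) ∧
    AdmitsTriangulation n
      (Finset.image
        (fun i : ℕ => s((((n - 1) / 2 : ℕ) : ZMod n) * (i : ZMod n),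
          (((n - 1) / 2 : ℕ) : ZMod n) * ((i : ZMod n) + 1))) (Finset.range n)) := by
  haveI : NeZero n := ⟨by omega⟩
  obtain ⟨p, hp, hnp⟩ : ∃ p, 3 ≤ p ∧ n = 2 * p + 3 := by
    obtain ⟨m, hm⟩ := hodd
    exact ⟨m - 1, by omega, by omega⟩
  have hα : (n - 1) / 2 = p + 1 := by omega
  rw [hα]
  set F := Finset.image
      (fun i : ℕ => s(((p + 1 : ℕ) : ZMod n) * (i : ZMod n),
        ((p + 1 : ℕ) : ZMod n) * ((i : ZMod n) + 1))) (Finset.range n) with hFdef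
  -- basic helpers
  have hinj : ∀ a b : ℕ, a < n → b < n → ((a : ZMod n) = b) → a = b := by
    intro a b ha hb h
    have h2 := congrArg ZMod.val h
    rwa [ZMod.val_cast_of_lt ha, ZMod.val_cast_of_lt hb] at h2
  have hdvd0 : ∀ m : ℕ, ((m : ZMod n) = 0) → n ∣ m := by
    intro m h
    exact (ZMod.natCast_eq_zero_iff m n).mp h
  have hdvd_id : ∀ m : ℕ, n ∣ m → 0 < m → m < 2 * n → m = n := by
    intro m hm h1 h2
    have h3 := Nat.le_of_dvd h1 hm
    have h4 : n ∣ m - n := Nat.dvd_sub hm dvd_rfl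
    rcases Nat.eq_zero_or_pos (m - n) with h5 | h5
    · omega
    · have := Nat.le_of_dvd h5 h4; omega
  -- gcd
  have hgcd : Nat.gcd (p + 1) n = 1 := by
    have h1 : n % (p + 1) = 1 := by
      rw [hnp, show 2 * p + 3 = 1 + (p + 1) * 2 from by ring, Nat.add_mul_mod_self_left]
      exact Nat.mod_eq_of_lt (by omega)
    rw [Nat.gcd_rec, h1]
    exact Nat.gcd_one_left _
  have hcop : Nat.Coprime (p + 1) n := hgcd
  obtain ⟨u, hu⟩ : ∃ u : (ZMod n)ˣ, (u : ZMod n) = ((p + 1 : ℕ) : ZMod n) :=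
    ⟨ZMod.unitOfCoprime (p + 1) hcop, ZMod.coe_unitOfCoprime _ _⟩
  -- no boundary edge of H
  have hnb : ∀ e ∈ F, ¬ IsBoundary n e := by
    intro e he hb
    rw [hFdef] at he
    simp only [Finset.mem_image, Finset.mem_range] at he
    obtain ⟨i, hi, rfl⟩ := he
    obtain ⟨j, hj⟩ := hb
    rw [Sym2.eq_iff] at hj
    rcases hj with ⟨h1, h2⟩ | ⟨h1, h2⟩
    · have hz : ((p : ℕ) : ZMod n) = 0 := by
        push_cast at h1 h2 ⊢; linear_combination h2 - h1
      have := Nat.le_of_dvd (by omega) (hdvd0 _ hz); omega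
    · have hz : ((p + 2 : ℕ) : ZMod n) = 0 := by
        push_cast at h1 h2 ⊢; linear_combination h2 - h1
      have := Nat.le_of_dvd (by omega) (hdvd0 _ hz); omega
  -- the Hamiltonian cycle structure
  have hham : IsHamCycle n F := by
    refine ⟨⟨fun x => (u : ZMod n) * x, fun x => ((u⁻¹ : (ZMod n)ˣ) : ZMod n) * x,
      fun x => u.inv_mul_cancel_left x, fun x => u.mul_inv_cancel_left x⟩, ?_, ?_⟩
    · have hgfun : (fun i : ℕ => s((u : ZMod n) * (i : ZMod n), (u : ZMod n) * ((i : ZMod n) + 1)))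
          = (fun i : ℕ => s(((p + 1 : ℕ) : ZMod n) * (i : ZMod n),
              ((p + 1 : ℕ) : ZMod n) * ((i : ZMod n) + 1))) := by
        funext i; rw [hu]
      rw [hFdef]
      exact congrArg (fun f => Finset.image f (Finset.range n)) hgfun.symm
    · rw [hFdef, Finset.card_image_of_injOn, Finset.card_range]
      intro i hi j hj h
      simp only [Finset.coe_range, Set.mem_Iio] at hi hj
      rw [Sym2.eq_iff] at h
      have cancel : ∀ x y : ZMod n,
          ((p + 1 : ℕ) : ZMod n) * x = ((p + 1 : ℕ) : ZMod n) * y → x = y := by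
        intro x y hxy
        rw [← hu] at hxy
        exact (Units.mul_right_inj u).mp hxy
      rcases h with ⟨h1, h2⟩ | ⟨h1, h2⟩
      · exact hinj i j hi hj (cancel _ _ h1)
      · exfalso
        have e1 := cancel _ _ h1
        have e2 := cancel _ _ h2
        have hz : ((2 : ℕ) : ZMod n) = 0 := by
          push_cast at e1 e2 ⊢; linear_combination e2 - e1
        have := Nat.le_of_dvd (by omega) (hdvd0 _ hz); omega
  -- the triangulation
  have hvp : ((p : ℕ) : ZMod n).val = p := ZMod.val_cast_of_lt (by omega)
  have hvp2 : ((p + 2 : ℕ) : ZMod n).val = p + 2 := ZMod.val_cast_of_lt (by omega)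
  have hvp3 : ((p + 3 : ℕ) : ZMod n).val = p + 3 := ZMod.val_cast_of_lt (by omega)
  have hv0 : ((0 : ℕ) : ZMod n).val = 0 := by rw [Nat.cast_zero, ZMod.val_zero]
  set K : Finset ℕ := (Finset.Icc 2 (n - 2)) \ {p + 1, p + 2} with hK
  set T : Finset (Sym2 (ZMod n)) :=
    insert s(((p : ℕ) : ZMod n), ((p + 2 : ℕ) : ZMod n))
      (insert s(((p : ℕ) : ZMod n), ((p + 3 : ℕ) : ZMod n))
        (K.image (fun k : ℕ => s(((0 : ℕ) : ZMod n), (k : ZMod n))))) with hT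
  have hmemT : ∀ e ∈ T, e = s(((p : ℕ) : ZMod n), ((p + 2 : ℕ) : ZMod n)) ∨
      e = s(((p : ℕ) : ZMod n), ((p + 3 : ℕ) : ZMod n)) ∨
      ∃ k, (2 ≤ k ∧ k ≤ n - 2 ∧ k ≠ p + 1 ∧ k ≠ p + 2) ∧
        e = s(((0 : ℕ) : ZMod n), (k : ZMod n)) := by
    intro e he
    rw [hT] at he
    simp only [Finset.mem_insert, Finset.mem_image, hK, Finset.mem_sdiff, Finset.mem_Icc,
      Finset.mem_singleton] at he
    rcases he with rfl | rfl | ⟨k, ⟨⟨hk1, hk2⟩, hk3⟩, rfl⟩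
    · exact Or.inl rfl
    · exact Or.inr (Or.inl rfl)
    · refine Or.inr (Or.inr ⟨k, ⟨hk1, hk2, ?_, ?_⟩, rfl⟩) <;> intro h <;> subst h <;> tauto
  -- cardinality of T
  have hsub : ({p + 1, p + 2} : Finset ℕ) ⊆ Finset.Icc 2 (n - 2) := by
    intro x hx
    simp only [Finset.mem_insert, Finset.mem_singleton] at hx
    rcases hx with rfl | rfl <;> rw [Finset.mem_Icc] <;> omega
  have hpair : ({p + 1, p + 2} : Finset ℕ).card = 2 := by
    rw [Finset.card_insert_of_notMem (by simp), Finset.card_singleton]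
  have hKcard : K.card = n - 5 := by
    rw [hK, Finset.card_sdiff_of_subset hsub, Nat.card_Icc, hpair]; omega
  have himgcard : (K.image (fun k : ℕ => s(((0 : ℕ) : ZMod n), (k : ZMod n)))).card = n - 5 := by
    rw [Finset.card_image_of_injOn, hKcard]
    intro i hi j hj hij
    simp only [Finset.mem_coe, hK, Finset.mem_sdiff, Finset.mem_Icc] at hi hj
    rw [Sym2.eq_iff] at hij
    rcases hij with ⟨-, h⟩ | ⟨h1, h2⟩
    · exact hinj i j (by omega) (by omega) h
    · exfalso
      have := hinj 0 j (by omega) (by omega) h1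
      omega
  have hmemK : ∀ k : ℕ, k ∈ K → 2 ≤ k ∧ k ≤ n - 2 := by
    intro k hk
    simp only [hK, Finset.mem_sdiff, Finset.mem_Icc] at hk
    exact hk.1
  have hE2notin : s(((p : ℕ) : ZMod n), ((p + 3 : ℕ) : ZMod n)) ∉
      K.image (fun k : ℕ => s(((0 : ℕ) : ZMod n), (k : ZMod n))) := by
    intro h
    simp only [Finset.mem_image] at h
    obtain ⟨k, hk, hEq⟩ := h
    obtain ⟨hk1, hk2⟩ := hmemK k hk
    rw [Sym2.eq_iff] at hEq
    rcases hEq with ⟨h1, -⟩ | ⟨h1, -⟩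
    · have := hinj 0 p (by omega) (by omega) h1; omega
    · have := hinj 0 (p + 3) (by omega) (by omega) h1; omega
  have hE1notin : s(((p : ℕ) : ZMod n), ((p + 2 : ℕ) : ZMod n)) ∉
      insert s(((p : ℕ) : ZMod n), ((p + 3 : ℕ) : ZMod n))
        (K.image (fun k : ℕ => s(((0 : ℕ) : ZMod n), (k : ZMod n)))) := by
    intro h
    simp only [Finset.mem_insert, Finset.mem_image] at h
    rcases h with h | ⟨k, hk, hEq⟩
    · rw [Sym2.eq_iff] at h
      rcases h with ⟨-, h2⟩ | ⟨h1, -⟩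
      · have := hinj (p + 2) (p + 3) (by omega) (by omega) h2; omega
      · have := hinj p (p + 3) (by omega) (by omega) h1; omega
    · obtain ⟨hk1, hk2⟩ := hmemK k hk
      rw [Sym2.eq_iff] at hEq
      rcases hEq with ⟨h1, -⟩ | ⟨h1, -⟩
      · have := hinj 0 p (by omega) (by omega) h1; omega
      · have := hinj 0 (p + 2) (by omega) (by omega) h1; omega
  have hTcard : T.card = n - 3 := by
    rw [hT, Finset.card_insert_of_notMem hE1notin,
      Finset.card_insert_of_notMem hE2notin, himgcard]
    omega
  -- diagonals
  have hdiag : ∀ e ∈ T, IsDiagonal n e := by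
    intro e he
    rcases hmemT e he with rfl | rfl | ⟨k, ⟨hk1, hk2, hk3, hk4⟩, rfl⟩
    · constructor
      · rw [Sym2.mk_isDiag_iff]
        intro h
        have := hinj p (p + 2) (by omega) (by omega) h; omega
      · rintro ⟨j, hj⟩
        rw [Sym2.eq_iff] at hj
        rcases hj with ⟨h1, h2⟩ | ⟨h1, h2⟩
        · have hz : ((1 : ℕ) : ZMod n) = 0 := by
            push_cast at h1 h2 ⊢; linear_combination h2 - h1
          have := Nat.le_of_dvd (by omega) (hdvd0 _ hz); omega
        · have hz : ((3 : ℕ) : ZMod n) = 0 := by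
            push_cast at h1 h2 ⊢; linear_combination h2 - h1
          have := Nat.le_of_dvd (by omega) (hdvd0 _ hz); omega
    · constructor
      · rw [Sym2.mk_isDiag_iff]
        intro h
        have := hinj p (p + 3) (by omega) (by omega) h; omega
      · rintro ⟨j, hj⟩
        rw [Sym2.eq_iff] at hj
        rcases hj with ⟨h1, h2⟩ | ⟨h1, h2⟩
        · have hz : ((2 : ℕ) : ZMod n) = 0 := by
            push_cast at h1 h2 ⊢; linear_combination h2 - h1
          have := Nat.le_of_dvd (by omega) (hdvd0 _ hz); omega
        · have hz : ((4 : ℕ) : ZMod n) = 0 := by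
            push_cast at h1 h2 ⊢; linear_combination h2 - h1
          have := Nat.le_of_dvd (by omega) (hdvd0 _ hz); omega
    · constructor
      · rw [Sym2.mk_isDiag_iff]
        intro h
        have := hinj 0 k (by omega) (by omega) h; omega
      · rintro ⟨j, hj⟩
        rw [Sym2.eq_iff] at hj
        rcases hj with ⟨h1, h2⟩ | ⟨h1, h2⟩
        · have hz : ((k : ℕ) : ZMod n) = ((1 : ℕ) : ZMod n) := by
            push_cast at h1 h2 ⊢; linear_combination h2 - h1
          have := hinj k 1 (by omega) (by omega) hz; omega
        · have hz : ((k + 1 : ℕ) : ZMod n) = 0 := by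
            push_cast at h1 h2 ⊢; linear_combination h2 - h1
          have := Nat.le_of_dvd (by omega) (hdvd0 _ hz); omega
  -- non-crossing
  have hNC : ∀ e ∈ T, ∀ f ∈ T, ¬ Cross n e f := by
    intro e he f hf
    rcases hmemT e he with rfl | rfl | ⟨k, ⟨hk1, hk2, hk3, hk4⟩, rfl⟩ <;>
      rcases hmemT f hf with rfl | rfl | ⟨l, ⟨hl1, hl2, hl3, hl4⟩, rfl⟩
    · exact not_cross_of_mem _ (Sym2.mem_iff.mpr (Or.inl rfl)) (Sym2.mem_iff.mpr (Or.inl rfl))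
    · exact not_cross_of_mem _ (Sym2.mem_iff.mpr (Or.inl rfl)) (Sym2.mem_iff.mpr (Or.inl rfl))
    · have hl' : ((l : ℕ) : ZMod n).val = l := ZMod.val_cast_of_lt (by omega)
      rw [cross_iff]
      simp only [inOpenArc_iff_val, hvp, hvp2, hvp3, hv0, hl']
      omega
    · exact not_cross_of_mem _ (Sym2.mem_iff.mpr (Or.inl rfl)) (Sym2.mem_iff.mpr (Or.inl rfl))
    · exact not_cross_of_mem _ (Sym2.mem_iff.mpr (Or.inl rfl)) (Sym2.mem_iff.mpr (Or.inl rfl))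
    · have hl' : ((l : ℕ) : ZMod n).val = l := ZMod.val_cast_of_lt (by omega)
      rw [cross_iff]
      simp only [inOpenArc_iff_val, hvp, hvp2, hvp3, hv0, hl']
      omega
    · have hk' : ((k : ℕ) : ZMod n).val = k := ZMod.val_cast_of_lt (by omega)
      rw [cross_iff]
      simp only [inOpenArc_iff_val, hvp, hvp2, hvp3, hv0, hk']
      omega
    · have hk' : ((k : ℕ) : ZMod n).val = k := ZMod.val_cast_of_lt (by omega)
      rw [cross_iff]
      simp only [inOpenArc_iff_val, hvp, hvp2, hvp3, hv0, hk']
      omega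
    · exact not_cross_of_mem _ (Sym2.mem_iff.mpr (Or.inl rfl)) (Sym2.mem_iff.mpr (Or.inl rfl))
  -- T avoids F
  have hnotF : ∀ e ∈ T, e ∉ F := by
    intro e heT heF
    rw [hFdef] at heF
    simp only [Finset.mem_image, Finset.mem_range] at heF
    obtain ⟨i, hi, hEq⟩ := heF
    rcases hmemT e heT with rfl | rfl | ⟨k, ⟨hk1, hk2, hk3, hk4⟩, rfl⟩
    · rw [Sym2.eq_iff] at hEq
      rcases hEq with ⟨h1, h2⟩ | ⟨h1, h2⟩
      · have hz : ((p : ℕ) : ZMod n) = ((1 : ℕ) : ZMod n) := by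
          push_cast at h1 h2 ⊢; linear_combination h2 - h1
        have := hinj p 1 (by omega) (by omega) hz; omega
      · have hz : ((p + 3 : ℕ) : ZMod n) = 0 := by
          push_cast at h1 h2 ⊢; linear_combination h2 - h1
        have := Nat.le_of_dvd (by omega) (hdvd0 _ hz); omega
    · rw [Sym2.eq_iff] at hEq
      rcases hEq with ⟨h1, h2⟩ | ⟨h1, h2⟩
      · have hz : ((p : ℕ) : ZMod n) = ((2 : ℕ) : ZMod n) := by
          push_cast at h1 h2 ⊢; linear_combination h2 - h1
        have := hinj p 2 (by omega) (by omega) hz; omega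
      · have hz : ((p + 4 : ℕ) : ZMod n) = 0 := by
          push_cast at h1 h2 ⊢; linear_combination h2 - h1
        have := Nat.le_of_dvd (by omega) (hdvd0 _ hz); omega
    · rw [Sym2.eq_iff] at hEq
      rcases hEq with ⟨h1, h2⟩ | ⟨h1, h2⟩
      · have hz : ((p + 1 : ℕ) : ZMod n) = ((k : ℕ) : ZMod n) := by
          push_cast at h1 h2 ⊢; linear_combination h2 - h1
        have := hinj (p + 1) k (by omega) (by omega) hz; omega
      · have hz : ((k + p + 1 : ℕ) : ZMod n) = 0 := by
          push_cast at h1 h2 ⊢; linear_combination h2 - h1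
        have := hdvd_id _ (hdvd0 _ hz) (by omega) (by omega)
        omega
  exact ⟨hgcd, hham, hnb, hnb, T, hTcard, hdiag, hNC, hnotF⟩

end ConvexTri
end

section
/- In the convex complete graph K_7: (a) if F is the set of edges ofreach the 7-cycle v_0v_2v_4v_6v_1v_3v_5v_0, then K_7 − F admits no triangulation; (b) if F is the set of edges of the 7-cycle v_0v_3v_6v_2v_5v_1v_4v_0, then K_7 − F admits no triangulation; (c) if F is the set of edges of the 7-cycle v_0v_2v_6v_4v_1v_3v_5v_0, then K_7 − F admits a triangulation, and indeed {v_6v_1, v_1v_5, v_5v_2, v_2v_4} is a set of 4 pairwise non-crossing diagonals disjoint from F. -/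
namespace ConvexTri

def Fa : Finset (Sym2 (ZMod 7)) :=
  {s(0, 2), s(2, 4), s(4, 6), s(6, 1), s(1, 3), s(3, 5), s(5, 0)}

def Fb : Finset (Sym2 (ZMod 7)) :=
  {s(0, 3), s(3, 6), s(6, 2), s(2, 5), s(5, 1), s(1, 4), s(4, 0)}

def Fc : Finset (Sym2 (ZMod 7)) :=
  {s(0, 2), s(2, 6), s(6, 4), s(4, 1), s(1, 3), s(3, 5), s(5, 0)}

def Tc : Finset (Sym2 (ZMod 7)) :=
  {s(6, 1), s(1, 5), s(5, 2), s(2, 4)}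

/-!
Every diagonal of the heptagon joins two vertices at cyclic distance 2 or 3. `Fa` consists of
all seven diagonals of length 2 and `Fb` of all seven of length 3, so deleting either leaves
only the other family, and a triangulation would need 4 pairwise non-crossing diagonals from it.
Among the diagonals of length 3, two non-crossing ones share an endpoint, and three would close
a triangle cutting the boundary into three arcs of length at least 3, impossible on 7 vertices;
among those of length 2,
`v_i v_{i+2}` crosses exactly `v_{i±1} v_{i±1+2}`, so a non-crossing family is an independent
set of a 7-cycle and has at most 3 elements. Both bounds are checked over all quadruples.
-/

instance (n : ℕ) (a b x : ZMod n) : Decidable (InOpenArc n a b x) := by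
  unfold InOpenArc; infer_instance

theorem cross_mk_iff (n : ℕ) (a b c d : ZMod n) :
    Cross n s(a, b) s(c, d) ↔
      (InOpenArc n a b c ∧ InOpenArc n b a d) ∨ (InOpenArc n b a c ∧ InOpenArc n a b d) := by
  constructor
  · rintro ⟨a', b', c', d', he, hf, h1, h2⟩
    rw [Sym2.eq_iff] at he hf
    rcases he with ⟨rfl, rfl⟩ | ⟨rfl, rfl⟩ <;> rcases hf with ⟨rfl, rfl⟩ | ⟨rfl, rfl⟩ <;> tauto
  · rintro (⟨h1, h2⟩ | ⟨h1, h2⟩)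
    · exact ⟨a, b, c, d, rfl, rfl, h1, h2⟩
    · exact ⟨b, a, c, d, Sym2.eq_swap, rfl, h1, h2⟩

instance (n : ℕ) (e f : Sym2 (ZMod n)) : Decidable (Cross n e f) :=
  e.recOnSubsingleton fun _ _ => f.recOnSubsingleton fun _ _ =>
    decidable_of_iff _ (cross_mk_iff n _ _ _ _).symm

instance (n : ℕ) [NeZero n] (e : Sym2 (ZMod n)) : Decidable (IsBoundary n e) := by
  unfold IsBoundary; infer_instance

instance (n : ℕ) [NeZero n] (e : Sym2 (ZMod n)) : Decidable (IsDiagonal n e) := by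
  unfold IsDiagonal; infer_instance

def Noncrossing (n : ℕ) (T : Finset (Sym2 (ZMod n))) : Prop :=
  ∀ e ∈ T, ∀ f ∈ T, ¬ Cross n e f

instance (n : ℕ) : DecidablePred (Noncrossing n) := fun _ => by
  unfold Noncrossing; infer_instance

theorem Noncrossing.mono {n : ℕ} {T U : Finset (Sym2 (ZMod n))} (hT : Noncrossing n T)
    (hUT : U ⊆ T) : Noncrossing n U :=
  fun e he f hf => hT e (hUT he) f (hUT hf)

theorem not_admitsTriangulation_of_forall_noncrossing_subset {n : ℕ}
    {F S : Finset (Sym2 (ZMod n))} (hS : ∀ e, IsDiagonal n e → e ∉ F → e ∈ S)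
    (hsmall : ∀ T ⊆ S, Noncrossing n T → T.card < n - 3) :
    ¬ AdmitsTriangulation n F := by
  rintro ⟨-, T, hcard, hdiag, hnc, hF⟩
  exact (hsmall T (fun e he => hS e (hdiag e he) (hF e he)) hnc).ne hcard

theorem card_lt_four_of_noncrossing_subset {n : ℕ} {S T : Finset (Sym2 (ZMod n))}
    (hS : ∀ a ∈ S, ∀ b ∈ S, ∀ c ∈ S, ∀ d ∈ S,
      Noncrossing n {a, b, c, d} → ({a, b, c, d} : Finset (Sym2 (ZMod n))).card < 4)
    (hTS : T ⊆ S) (hT : Noncrossing n T) : T.card < 4 := by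
  by_contra! hcard
  obtain ⟨U, hUT, hU⟩ := Finset.exists_subset_card_eq hcard
  obtain ⟨a, V, haV, rfl, hV⟩ := Finset.card_eq_succ.mp hU
  obtain ⟨b, c, d, -, -, -, rfl⟩ := Finset.card_eq_three.mp hV
  have hmem : ∀ x ∈ ({a, b, c, d} : Finset (Sym2 (ZMod n))), x ∈ S := fun x hx => hTS (hUT hx)
  exact (hS a (hmem a (by simp)) b (hmem b (by simp)) c (hmem c (by simp)) d (hmem d (by simp))
    (hT.mono hUT)).ne hU

theorem mem_Fa_or_mem_Fb_of_isDiagonal (e : Sym2 (ZMod 7)) (he : IsDiagonal 7 e) :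
    e ∈ Fa ∨ e ∈ Fb := by
  induction e using Sym2.ind with
  | _ a b => revert a b; decide

set_option maxRecDepth 10000 in
set_option synthInstance.maxSize 1000 in
theorem card_lt_four_of_noncrossing_subset_Fa {T : Finset (Sym2 (ZMod 7))} (hTS : T ⊆ Fa)
    (hT : Noncrossing 7 T) : T.card < 4 :=
  card_lt_four_of_noncrossing_subset (by decide) hTS hT

set_option maxRecDepth 10000 in
set_option synthInstance.maxSize 1000 in
theorem card_lt_four_of_noncrossing_subset_Fb {T : Finset (Sym2 (ZMod 7))} (hTS : T ⊆ Fb)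
    (hT : Noncrossing 7 T) : T.card < 4 :=
  card_lt_four_of_noncrossing_subset (by decide) hTS hT

/-- In the convex `K_7`: the 7-cycles `v_0v_2v_4v_6v_1v_3v_5v_0` and
`v_0v_3v_6v_2v_5v_1v_4v_0` leave no triangulation, while `v_0v_2v_6v_4v_1v_3v_5v_0` does,
with `{v_6v_1, v_1v_5, v_5v_2, v_2v_4}` a set of 4 pairwise non-crossing diagonals
disjoint from it. -/
theorem stmt14 :
    ¬ AdmitsTriangulation 7 Fa ∧
    ¬ AdmitsTriangulation 7 Fb ∧
    AdmitsTriangulation 7 Fc ∧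
    Tc.card = 4 ∧ (∀ e ∈ Tc, IsDiagonal 7 e) ∧
    (∀ e ∈ Tc, ∀ f ∈ Tc, ¬ Cross 7 e f) ∧ (∀ e ∈ Tc, e ∉ Fc) := by
  have hFa : ¬ AdmitsTriangulation 7 Fa :=
    not_admitsTriangulation_of_forall_noncrossing_subset
      (fun e he heF => (mem_Fa_or_mem_Fb_of_isDiagonal e he).resolve_left heF)
      fun _ => card_lt_four_of_noncrossing_subset_Fb
  have hFb : ¬ AdmitsTriangulation 7 Fb :=
    not_admitsTriangulation_of_forall_noncrossing_subset
      (fun e he heF => (mem_Fa_or_mem_Fb_of_isDiagonal e he).resolve_right heF)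
      fun _ => card_lt_four_of_noncrossing_subset_Fa
  have hcard : Tc.card = 4 := by decide
  have hdiag : ∀ e ∈ Tc, IsDiagonal 7 e := by decide
  have hnc : ∀ e ∈ Tc, ∀ f ∈ Tc, ¬ Cross 7 e f := by decide
  have hdisj : ∀ e ∈ Tc, e ∉ Fc := by decide
  have hbdry : ∀ e ∈ Fc, ¬ IsBoundary 7 e := by decide
  exact ⟨hFa, hFb, ⟨hbdry, Tc, hcard, hdiag, hnc, hdisj⟩, hcard, hdiag, hnc, hdisj⟩

end ConvexTri
end
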